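/- arXiv:1404.4735 — 4 statements merged into one kernel-verified Lean document; each statement's English description precedes it below -/
import Mathlib

section
/- Let X₁ and X₂ be nonempty connected open subsets of ℂ, let f₁ : X₁ → ℂ and f₂ : X₂ → ℂ be analytic and non-constant, and let a ∈ X₁ and b ∈ X₂ be marked points. Suppose φ₁ : X₁ → ℂ and φ₂ : X₂ → ℂ are analytic and injective, with φ₁(X₁) ⊆ X₂, φ₂(X₂) ⊆ X₁, f₂(φ₁(z)) = f₁(z) for all z ∈ X₁, f₁(φ₂(w)) = f₂(w) for all w ∈ X₂, φ₁(a) = b and φ₂(b) = a. Then φ₁(X₁) = X₂ and φ₂(X₂) = X₁; that is, the two marked partial covers are structurally equivalent (the sub-structure preorder is an order on connected structures with a marked point). -/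
/-!
Put `ψ = φ₂ ∘ φ₁`, an analytic self-map of `X₁` fixing `a` with `f₁ ∘ ψ = f₁`. Near `a` write
`f₁ z - f₁ a = (z - a)ⁿ G z` with `G a ≠ 0`, and `ψ z - a = (z - a) w z` with `w = dslope ψ a`.
Invariance of `f₁` gives `wⁿ · (G ∘ ψ) = G`, so `ψ'(a)ⁿ = w(a)ⁿ = 1` and `h = ψ^[n]` has
`h'(a) = 1`. For `h` the same identity reads `(w - 1)(1 + w + ⋯ + wⁿ⁻¹)(G ∘ h) = G - G ∘ h`:
the left side is of size `n |G a| |w - 1|`, while the right side is `O(|z - a| |w - 1|)` because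
`G` is Lipschitz and `z - h z = (z - a)(1 - w)`. Hence `w = 1`, i.e. `h = id`, near `a`, and on
all of `X₁` by the identity theorem. So `ψ`, and with it `φ₂`, maps onto `X₁`; symmetrically
`φ₁` maps onto `X₂`.
-/

open Filter Topology Set

theorem AnalyticOnNhd.iterate {𝕜 E : Type*} [NontriviallyNormedField 𝕜] [NormedAddCommGroup E]
    [NormedSpace 𝕜 E] {g : E → E} {X : Set E} (hg : AnalyticOnNhd 𝕜 g X) (hgX : MapsTo g X X) :
    ∀ n, AnalyticOnNhd 𝕜 g^[n] X
  | 0 => analyticOnNhd_id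
  | n + 1 => fun z hz => by
    rw [Function.iterate_succ']
    exact (hg _ (hgX.iterate n hz)).comp (AnalyticOnNhd.iterate hg hgX n z hz)

section LocalNormalForm

variable {f g G : ℂ → ℂ} {a : ℂ} {n : ℕ}

theorem eventually_dslope_pow_mul_comp_eq (hg : DifferentiableAt ℂ g a) (hG : ContinuousAt G a)
    (hga : g a = a) (hfG : ∀ᶠ z in 𝓝 a, f z - f a = (z - a) ^ n * G z)
    (hfg : ∀ᶠ z in 𝓝 a, f (g z) = f z) :
    ∀ᶠ z in 𝓝 a, dslope g a z ^ n * G (g z) = G z := by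
  have hgt : Tendsto g (𝓝 a) (𝓝 a) := by simpa only [hga] using hg.continuousAt.tendsto
  have hcont : ContinuousAt (fun z => dslope g a z ^ n * G (g z)) a :=
    ((continuousAt_dslope_same.mpr hg).pow n).mul (hG.comp_of_eq hg.continuousAt hga)
  refine (hcont.eventuallyEq_nhds_iff_eventuallyEq_nhdsNE hG).mp ?_
  filter_upwards [eventually_nhdsWithin_of_eventually_nhds (hgt.eventually hfG),
    eventually_nhdsWithin_of_eventually_nhds hfG, eventually_nhdsWithin_of_eventually_nhds hfg,
    self_mem_nhdsWithin] with z hfgz hfz hcomm hza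
  have hslope : g z - a = (z - a) * dslope g a z := by
    rw [← smul_eq_mul, sub_smul_dslope, hga]
  refine mul_left_cancel₀ (pow_ne_zero n (sub_ne_zero.mpr hza)) ?_
  rw [← hfz, ← hcomm, hfgz, hslope, mul_pow]
  ring

theorem deriv_pow_eq_one_of_comp_eq (hg : DifferentiableAt ℂ g a) (hG : ContinuousAt G a)
    (hGa : G a ≠ 0) (hga : g a = a) (hfG : ∀ᶠ z in 𝓝 a, f z - f a = (z - a) ^ n * G z)
    (hfg : ∀ᶠ z in 𝓝 a, f (g z) = f z) :
    deriv g a ^ n = 1 := by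
  have h := (eventually_dslope_pow_mul_comp_eq hg hG hga hfG hfg).self_of_nhds
  rw [dslope_same, hga] at h
  exact mul_right_cancel₀ hGa (h.trans (one_mul _).symm)

theorem eventually_eq_self_of_comp_eq_of_deriv_eq_one (hn : 0 < n)
    (hg : DifferentiableAt ℂ g a) (hG : ContDiffAt ℂ 1 G a) (hGa : G a ≠ 0) (hga : g a = a)
    (hg' : deriv g a = 1) (hfG : ∀ᶠ z in 𝓝 a, f z - f a = (z - a) ^ n * G z)
    (hfg : ∀ᶠ z in 𝓝 a, f (g z) = f z) :
    ∀ᶠ z in 𝓝 a, g z = z := by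
  have hgt : Tendsto g (𝓝 a) (𝓝 a) := by simpa only [hga] using hg.continuousAt.tendsto
  obtain ⟨K, t, ht, hK⟩ := hG.exists_lipschitzOnWith
  have hpos : ∀ᶠ z in 𝓝 a,
      K * ‖z - a‖ < ‖(∑ i ∈ Finset.range n, dslope g a z ^ i) * G (g z)‖ := by
    have hw : ContinuousAt (dslope g a) a := continuousAt_dslope_same.mpr hg
    have hS : ContinuousAt (fun z => ∑ i ∈ Finset.range n, dslope g a z ^ i) a :=
      tendsto_finsetSum _ fun i _ => hw.pow i
    have hGg : ContinuousAt (fun z => G (g z)) a := hG.continuousAt.comp_of_eq hg.continuousAt hga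
    have hcont : ContinuousAt
        (fun z => ‖(∑ i ∈ Finset.range n, dslope g a z ^ i) * G (g z)‖ - K * ‖z - a‖) a :=
      (hS.mul hGg).norm.sub (continuousAt_const.mul (continuousAt_id.sub continuousAt_const).norm)
    have hval : 0 < ‖(∑ i ∈ Finset.range n, dslope g a a ^ i) * G (g a)‖ - K * ‖a - a‖ := by
      simp [dslope_same, hg', hga, hn, hGa]
    filter_upwards [hcont.eventually (lt_mem_nhds hval)] with z hz
    linarith
  filter_upwards [eventually_dslope_pow_mul_comp_eq hg hG.continuousAt hga hfG hfg, hpos, ht,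
    hgt.eventually ht] with z hwz hposz hzt hgzt
  have hslope : g z = a + (z - a) * dslope g a z := by
    rw [← smul_eq_mul, sub_smul_dslope, hga]; ring
  suffices dslope g a z = 1 by rw [hslope, this]; ring
  by_contra hw1
  have hdiff : G z - G (g z)
      = (dslope g a z - 1) * ((∑ i ∈ Finset.range n, dslope g a z ^ i) * G (g z)) := by
    rw [← hwz]; linear_combination (-G (g z)) * geom_sum_mul (dslope g a z) n
  have hlip : ‖G z - G (g z)‖ ≤ K * ‖z - a‖ * ‖dslope g a z - 1‖ := by
    have hzg : z - g z = -((z - a) * (dslope g a z - 1)) := by rw [hslope]; ring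
    simpa [hzg, norm_mul, mul_assoc] using hK.norm_sub_le hzt hgzt
  rw [hdiff, norm_mul] at hlip
  have hw1pos : 0 < ‖dslope g a z - 1‖ := norm_pos_iff.mpr (sub_ne_zero.mpr hw1)
  exact hposz.not_ge (le_of_mul_le_mul_left (hlip.trans_eq (mul_comm _ _)) hw1pos)

end LocalNormalForm

theorem exists_iterate_eqOn_id_of_comp_eq {X : Set ℂ} {f g : ℂ → ℂ} {a : ℂ} (hXo : IsOpen X)
    (hXc : IsPreconnected X) (ha : a ∈ X) (hf : AnalyticOnNhd ℂ f X)
    (hfnc : ¬ ∃ c, ∀ z ∈ X, f z = c) (hg : AnalyticOnNhd ℂ g X) (hgX : MapsTo g X X)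
    (hga : g a = a) (hfg : ∀ z ∈ X, f (g z) = f z) :
    ∃ n, 0 < n ∧ EqOn g^[n] id X := by
  have hXa : X ∈ 𝓝 a := hXo.mem_nhds ha
  have hf_loc : ¬ ∀ᶠ z in 𝓝 a, f z - f a = 0 := fun h => hfnc ⟨f a, fun z hz =>
    hf.eqOn_of_preconnected_of_eventuallyEq analyticOnNhd_const hXc ha
      (h.mono fun _ => sub_eq_zero.mp) hz⟩
  obtain ⟨n, G, hG, hGa, hfG⟩ :=
    ((hf a ha).sub analyticAt_const).exists_eventuallyEq_pow_smul_nonzero_iff.mpr hf_loc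
  simp only [Pi.sub_apply, smul_eq_mul] at hfG
  have hn : 0 < n := by
    refine Nat.pos_of_ne_zero fun hn => hGa ?_
    simpa [hn] using hfG.self_of_nhds.symm
  have hfg_iter : ∀ j, ∀ z ∈ X, f (g^[j] z) = f z := by
    intro j
    induction j with
    | zero => exact fun _ _ => rfl
    | succ j ih =>
      intro z hz
      rw [Function.iterate_succ_apply', hfg _ (hgX.iterate j hz), ih z hz]
  have hgn := hg.iterate hgX n
  have hderiv : deriv g^[n] a = 1 := by
    rw [(HasDerivAt.iterate _ (hg a ha).differentiableAt.hasDerivAt hga n).deriv]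
    exact deriv_pow_eq_one_of_comp_eq (hg a ha).differentiableAt hG.continuousAt hGa hga hfG
      (eventually_of_mem hXa hfg)
  have hid : ∀ᶠ z in 𝓝 a, g^[n] z = z :=
    eventually_eq_self_of_comp_eq_of_deriv_eq_one hn (hgn a ha).differentiableAt hG.contDiffAt hGa
      (Function.iterate_fixed hga n) hderiv hfG (eventually_of_mem hXa (hfg_iter n))
  exact ⟨n, hn, hgn.eqOn_of_preconnected_of_eventuallyEq analyticOnNhd_id hXc ha hid⟩

theorem image_eq_of_comp_eq {X Y : Set ℂ} {f φ ψ : ℂ → ℂ} {a : ℂ} (hXo : IsOpen X)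
    (hXc : IsPreconnected X) (ha : a ∈ X) (hf : AnalyticOnNhd ℂ f X)
    (hfnc : ¬ ∃ c, ∀ z ∈ X, f z = c) (hφ : AnalyticOnNhd ℂ φ X) (hψ : AnalyticOnNhd ℂ ψ Y)
    (hφXY : MapsTo φ X Y) (hψYX : MapsTo ψ Y X) (hcomm : ∀ z ∈ X, f (ψ (φ z)) = f z)
    (hmark : ψ (φ a) = a) :
    ψ '' Y = X := by
  have hψφ : AnalyticOnNhd ℂ (ψ ∘ φ) X := fun z hz => (hψ _ (hφXY hz)).comp (hφ z hz)
  obtain ⟨n, hn, hid⟩ := exists_iterate_eqOn_id_of_comp_eq hXo hXc ha hf hfnc hψφ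
    (hψYX.comp hφXY) hmark hcomm
  refine (hψYX.image_subset).antisymm fun z hz => ?_
  obtain ⟨m, rfl⟩ := Nat.exists_eq_add_of_lt hn
  refine ⟨φ ((ψ ∘ φ)^[m] z), hφXY ((hψYX.comp hφXY).iterate m hz), ?_⟩
  simpa [Function.iterate_succ_apply'] using hid hz

theorem structural_preorder_is_order_on_marked_connected_general
    (X₁ X₂ : Set ℂ) (hX₁o : IsOpen X₁) (hX₂o : IsOpen X₂)
    (hX₁c : IsConnected X₁) (hX₂c : IsConnected X₂)
    (f₁ f₂ φ₁ φ₂ : ℂ → ℂ) (a b : ℂ)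
    (ha : a ∈ X₁) (hb : b ∈ X₂)
    (hf₁ : AnalyticOnNhd ℂ f₁ X₁) (hf₂ : AnalyticOnNhd ℂ f₂ X₂)
    (hf₁nc : ¬ ∃ c : ℂ, ∀ z ∈ X₁, f₁ z = c)
    (hf₂nc : ¬ ∃ c : ℂ, ∀ z ∈ X₂, f₂ z = c)
    (hφ₁ : AnalyticOnNhd ℂ φ₁ X₁) (hφ₂ : AnalyticOnNhd ℂ φ₂ X₂)
    (hφ₁maps : Set.MapsTo φ₁ X₁ X₂) (hφ₂maps : Set.MapsTo φ₂ X₂ X₁)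
    (hcomm₁ : ∀ z ∈ X₁, f₂ (φ₁ z) = f₁ z)
    (hcomm₂ : ∀ w ∈ X₂, f₁ (φ₂ w) = f₂ w)
    (hmark₁ : φ₁ a = b) (hmark₂ : φ₂ b = a) :
    φ₁ '' X₁ = X₂ ∧ φ₂ '' X₂ = X₁ := by
  constructor
  · refine image_eq_of_comp_eq hX₂o hX₂c.isPreconnected hb hf₂ hf₂nc hφ₂ hφ₁ hφ₂maps hφ₁maps
      (fun w hw => ?_) (by rw [hmark₂, hmark₁])
    rw [hcomm₁ _ (hφ₂maps hw), hcomm₂ _ hw]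
  · refine image_eq_of_comp_eq hX₁o hX₁c.isPreconnected ha hf₁ hf₁nc hφ₁ hφ₂ hφ₁maps hφ₂maps
      (fun z hz => ?_) (by rw [hmark₁, hmark₂])
    rw [hcomm₂ _ (hφ₁maps hz), hcomm₁ _ hz]

/-- The sub-structure preorder is an order on connected marked analytic partial
covers over `ℂ`: if each of `(a, f₁)` and `(b, f₂)` is a sub-structure of the
other (via analytic injections `φ₁`, `φ₂` respecting the maps and the marked
points), then `φ₁` and `φ₂` are surjective, i.e. the two structures are
equivalent. -/
theorem structural_preorder_is_order_on_marked_connected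
    (X₁ X₂ : Set ℂ) (hX₁o : IsOpen X₁) (hX₂o : IsOpen X₂)
    (hX₁c : IsConnected X₁) (hX₂c : IsConnected X₂)
    (f₁ f₂ φ₁ φ₂ : ℂ → ℂ) (a b : ℂ)
    (ha : a ∈ X₁) (hb : b ∈ X₂)
    (hf₁ : AnalyticOnNhd ℂ f₁ X₁) (hf₂ : AnalyticOnNhd ℂ f₂ X₂)
    (hf₁nc : ¬ ∃ c : ℂ, ∀ z ∈ X₁, f₁ z = c)
    (hf₂nc : ¬ ∃ c : ℂ, ∀ z ∈ X₂, f₂ z = c)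
    (hφ₁ : AnalyticOnNhd ℂ φ₁ X₁) (hφ₂ : AnalyticOnNhd ℂ φ₂ X₂)
    (hφ₁inj : Set.InjOn φ₁ X₁) (hφ₂inj : Set.InjOn φ₂ X₂)
    (hφ₁maps : Set.MapsTo φ₁ X₁ X₂) (hφ₂maps : Set.MapsTo φ₂ X₂ X₁)
    (hcomm₁ : ∀ z ∈ X₁, f₂ (φ₁ z) = f₁ z)
    (hcomm₂ : ∀ w ∈ X₂, f₁ (φ₂ w) = f₂ w)
    (hmark₁ : φ₁ a = b) (hmark₂ : φ₂ b = a) :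
    φ₁ '' X₁ = X₂ ∧ φ₂ '' X₂ = X₁ :=
  structural_preorder_is_order_on_marked_connected_general X₁ X₂ hX₁o hX₂o hX₁c hX₂c f₁ f₂ φ₁ φ₂ a b
    ha hb hf₁ hf₂ hf₁nc hf₂nc hφ₁ hφ₂ hφ₁maps hφ₂maps hcomm₁ hcomm₂ hmark₁ hmark₂
end

section
/- As d → ∞ along the integers d ≥ 2, the Blaschke products B_d converge to B_∞ uniformly on compact subsets of the open unit disk 𝔻 (i.e. the sequence (B_d) tends locally uniformly on 𝔻 to B_∞). -/
/-!
With `t = 1/(d+1)` one has `a_d = 1 - 2t`, and the Blaschke factor is `1 + w_t(z)/d` with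
`w_t(z) = 2(1-t)(z-1)/(1+(1-2t)z)`. This is jointly continuous on `[0,1] × 𝔻`, so
`w_{1/(d+1)} → w_0 = 2(z-1)/(z+1)` uniformly on compact subsets of `𝔻`. The theorem is then the
uniform version of `(1 + w/n)^n → exp w`, which follows from `‖n log(1 + u/n) - u‖ ≤ ‖u‖²/n`.
-/

open Complex Filter Topology Set

lemma Complex.norm_log_one_add_sub_self_le_sq {z : ℂ} (hz : ‖z‖ ≤ 1 / 2) :
    ‖log (1 + z) - z‖ ≤ ‖z‖ ^ 2 := by
  have hinv : (1 - ‖z‖)⁻¹ ≤ 2 := by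
    rw [inv_le_comm₀ (by linarith) two_pos]
    linarith
  calc ‖log (1 + z) - z‖ ≤ ‖z‖ ^ 2 * (1 - ‖z‖)⁻¹ / 2 :=
        norm_log_one_add_sub_self_le (by linarith)
    _ ≤ ‖z‖ ^ 2 * 2 / 2 := by gcongr
    _ = ‖z‖ ^ 2 := by ring

lemma Complex.norm_mul_log_one_add_div_sub_le {x : ℝ} {u : ℂ} (hx : 0 < x) (hu : 2 * ‖u‖ ≤ x) :
    ‖x * log (1 + u / x) - u‖ ≤ ‖u‖ ^ 2 / x := by
  have hux : ‖u / x‖ = ‖u‖ / x := by rw [norm_div, norm_real, Real.norm_of_nonneg hx.le]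
  have hsmall : ‖u / x‖ ≤ 1 / 2 := by
    rw [hux, div_le_iff₀ hx]
    linarith
  calc ‖x * log (1 + u / x) - u‖ = ‖(x : ℂ) * (log (1 + u / x) - u / x)‖ := by
        rw [mul_sub, mul_div_cancel₀ _ (ofReal_ne_zero.2 hx.ne')]
    _ = x * ‖log (1 + u / x) - u / x‖ := by rw [norm_mul, norm_real, Real.norm_of_nonneg hx.le]
    _ ≤ x * ‖u / x‖ ^ 2 := by gcongr; exact norm_log_one_add_sub_self_le_sq hsmall
    _ = ‖u‖ ^ 2 / x := by rw [hux]; field_simp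

lemma TendstoUniformlyOn.one_add_div_pow {α : Type*} {s : Set α} {w : ℕ → α → ℂ} {g : α → ℂ}
    (hw : TendstoUniformlyOn w g atTop s) (hg : ∃ R, ∀ x ∈ s, ‖g x‖ ≤ R) :
    TendstoUniformlyOn (fun n x => (1 + w n x / n) ^ n) (fun x => exp (g x)) atTop s := by
  obtain ⟨R, hR⟩ := hg
  have hw_small : ∀ᶠ n : ℕ in atTop, 0 < (n : ℝ) ∧ ∀ x ∈ s, ‖w n x‖ ≤ R + 1 ∧ 2 * ‖w n x‖ ≤ n := by
    filter_upwards [Metric.tendstoUniformlyOn_iff.1 hw 1 one_pos, eventually_gt_atTop 0,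
      tendsto_natCast_atTop_atTop.eventually_ge_atTop (2 * (R + 1))] with n hn hn0 hn2
    refine ⟨Nat.cast_pos.2 hn0, fun x hx => ?_⟩
    have hdist : ‖w n x - g x‖ < 1 := by simpa only [dist_eq_norm'] using hn x hx
    have hwx : ‖w n x‖ ≤ R + 1 := by linarith [norm_le_norm_sub_add (w n x) (g x), hR x hx]
    exact ⟨hwx, by linarith⟩
  have hlog : TendstoUniformlyOn (fun n x => n * log (1 + w n x / n) - w n x) 0 atTop s := by
    rw [Metric.tendstoUniformlyOn_iff]
    intro ε hε
    have hlim : Tendsto (fun n : ℕ => (R + 1) ^ 2 / n) atTop (𝓝 0) :=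
      tendsto_const_div_atTop_nhds_zero_nat _
    filter_upwards [hw_small, hlim.eventually (gt_mem_nhds hε)] with n ⟨hn0, hn⟩ hεn x hx
    rw [Pi.zero_apply, dist_zero_left]
    calc ‖(n : ℂ) * log (1 + w n x / n) - w n x‖ ≤ ‖w n x‖ ^ 2 / n := by
          exact_mod_cast norm_mul_log_one_add_div_sub_le hn0 (hn x hx).2
      _ ≤ (R + 1) ^ 2 / n := by gcongr; exact (hn x hx).1
      _ < ε := hεn
  have hv : TendstoUniformlyOn (fun n x => n * log (1 + w n x / n)) g atTop s := by
    simpa only [add_zero, Pi.add_def, add_sub_cancel] using hw.add hlog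
  refine (hv.comp_cexp ⟨R, ?_⟩).congr ?_
  · rintro _ ⟨x, hx, rfl⟩
    exact (re_le_norm _).trans (hR x hx)
  filter_upwards [hw_small] with n ⟨hn0, hn⟩ x hx
  have hsmall : ‖w n x / n‖ < 1 := by
    rw [norm_div, norm_natCast, div_lt_one hn0]
    linarith [(hn x hx).2]
  simp only [Function.comp_apply, exp_nat_mul,
    exp_log (slitPlane_ne_zero (mem_slitPlane_of_norm_lt_one hsmall))]

lemma IsCompact.tendstoUniformlyOn_of_continuousOn_prod {α β E : Type*} [TopologicalSpace α]
    [TopologicalSpace β] [UniformSpace E] {f : α → β → E} {s : Set α} {k : Set β} {q : α}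
    (hk : IsCompact k) (hf : ContinuousOn ↿f (s ×ˢ k)) (hq : q ∈ s) :
    TendstoUniformlyOn f (f q) (𝓝[s] q) k := fun u hu => by
  obtain ⟨v, hv, hvu⟩ := hk.mem_uniformity_of_prod hf hq (symm_le_uniformity hu)
  exact eventually_of_mem hv hvu

lemma one_add_one_sub_two_mul_ne_zero {t : ℝ} (ht : t ∈ Icc 0 1) {z : ℂ} (hz : ‖z‖ < 1) :
    1 + (1 - 2 * t : ℝ) * z ≠ 0 := by
  refine slitPlane_ne_zero (mem_slitPlane_of_norm_lt_one ?_)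
  rw [norm_mul, norm_real, Real.norm_eq_abs]
  calc |1 - 2 * t| * ‖z‖ ≤ 1 * ‖z‖ := by
        gcongr
        exact abs_le.2 ⟨by linarith [ht.2], by linarith [ht.1]⟩
    _ < 1 := by rwa [one_mul]

lemma inv_natCast_add_one_mem_Icc (d : ℕ) : ((d : ℝ) + 1)⁻¹ ∈ Icc 0 1 :=
  ⟨by positivity, inv_le_one_of_one_le₀ (by linarith [d.cast_nonneg (α := ℝ)])⟩

lemma tendsto_inv_natCast_add_one_nhdsWithin_Icc :
    Tendsto (fun d : ℕ => ((d : ℝ) + 1)⁻¹) atTop (𝓝[Icc 0 1] 0) :=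
  tendsto_nhdsWithin_iff.2 ⟨by simpa using tendsto_one_div_add_atTop_nhds_zero_nat (𝕜 := ℝ),
    .of_forall inv_natCast_add_one_mem_Icc⟩

/-- `d (b_d(z) - 1)` for the Blaschke factor `b_d(z) = (z + a_d)/(1 + a_d z)`, written in the
variable `t = 1/(d+1)` (so `a_d = 1 - 2t`); unlike `d`, `t` has a finite limit. -/
noncomputable def blaschkeDeviation (t : ℝ) (z : ℂ) : ℂ :=
  2 * (1 - t) * (z - 1) / (1 + (1 - 2 * t : ℝ) * z)

lemma continuousOn_blaschkeDeviation :
    ContinuousOn ↿blaschkeDeviation (Icc 0 1 ×ˢ Metric.ball 0 1) := by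
  refine ContinuousOn.div (by fun_prop) (by fun_prop) ?_
  rintro ⟨t, z⟩ ⟨ht, hz⟩
  exact one_add_one_sub_two_mul_ne_zero ht (mem_ball_zero_iff.1 hz)

lemma blaschke_factor_eq_one_add_blaschkeDeviation_div {d : ℕ} (hd : d ≠ 0) {z : ℂ}
    (hz : ‖z‖ < 1) :
    (z + ((d : ℂ) - 1) / ((d : ℂ) + 1)) / (1 + (((d : ℂ) - 1) / ((d : ℂ) + 1)) * z) =
      1 + blaschkeDeviation ((d : ℝ) + 1)⁻¹ z / d := by
  have hd1 : (d : ℂ) + 1 ≠ 0 := by exact_mod_cast d.succ_ne_zero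
  have hden : (d : ℂ) + 1 + z * (d - 1) ≠ 0 := by
    have := mul_ne_zero hd1 (one_add_one_sub_two_mul_ne_zero (inv_natCast_add_one_mem_Icc d) hz)
    push_cast at this
    convert this using 1
    field_simp
    ring
  rw [blaschkeDeviation]
  push_cast
  field_simp
  rw [show (d : ℂ) + 1 - 2 = d - 1 by ring]
  field_simp
  ring

/-- As `d → ∞`, the Blaschke products `B_d(z) = ((z + a_d)/(1 + a_d z))^d`,
with `a_d = (d-1)/(d+1)`, converge to `B_∞(z) = exp(2(z-1)/(z+1))` uniformly
on compact subsets of the open unit disk. -/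
theorem blaschke_tendsto_Binf :
    ∀ K ⊆ Metric.ball (0 : ℂ) 1, IsCompact K →
      TendstoUniformlyOn
        (fun (d : ℕ) (z : ℂ) => ((z + ((d : ℂ) - 1) / ((d : ℂ) + 1)) /
            (1 + (((d : ℂ) - 1) / ((d : ℂ) + 1)) * z)) ^ d)
        (fun z : ℂ => Complex.exp (2 * (z - 1) / (z + 1)))
        Filter.atTop K := by
  intro K hK hKc
  have hcont : ContinuousOn ↿blaschkeDeviation (Icc 0 1 ×ˢ K) :=
    continuousOn_blaschkeDeviation.mono (prod_mono_right hK)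
  have hw : TendstoUniformlyOn (fun d : ℕ => blaschkeDeviation ((d : ℝ) + 1)⁻¹)
      (blaschkeDeviation 0) atTop K := fun u hu =>
    tendsto_inv_natCast_add_one_nhdsWithin_Icc.eventually
      (hKc.tendstoUniformlyOn_of_continuousOn_prod hcont ⟨le_rfl, zero_le_one⟩ u hu)
  have hbdd : ∃ R, ∀ z ∈ K, ‖blaschkeDeviation 0 z‖ ≤ R :=
    hKc.exists_bound_of_continuousOn (hcont.uncurry_left 0 (left_mem_Icc.2 zero_le_one))
  refine ((hw.one_add_div_pow hbdd).congr ?_).congr_right ?_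
  · filter_upwards [eventually_ne_atTop 0] with d hd z hz
    simp only [blaschke_factor_eq_one_add_blaschkeDeviation_div hd (mem_ball_zero_iff.1 (hK hz))]
  · intro z _
    simp [blaschkeDeviation, add_comm]
end

section
/- Let d ≥ 2 be an integer and let z ∈ ℂ satisfy z ≠ −1, 1 + a_d z ≠ 0 and B_d(z) ≠ −1. Set u = (1 − z)/(1 + z). Then (1 + u/d)^d + (1 − u/d)^d ≠ 0 and (1 − B_d(z))/(1 + B_d(z)) = ((1 + u/d)^d − (1 − u/d)^d) / ((1 + u/d)^d + (1 − u/d)^d). That is, in the half-plane coordinate u = (1−z)/(1+z), the map B_d is conjugated to u ↦ odd((1+u/d)^d)/even((1+u/d)^d), the ratio of the odd and even parts of (1+u/d)^d. -/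
/-- In the half-plane coordinate `u = (1-z)/(1+z)`, the Blaschke product
`B_d(z) = ((z + a_d)/(1 + a_d z))^d`, with `a_d = (d-1)/(d+1)`, is conjugated
to the ratio of the odd and even parts of `(1 + u/d)^d`:
`(1 - B_d z)/(1 + B_d z) = ((1+u/d)^d - (1-u/d)^d)/((1+u/d)^d + (1-u/d)^d)`,
the denominator being nonzero. -/
theorem blaschke_halfplane_coordinate (d : ℕ) (hd : 2 ≤ d) (z u : ℂ)
    (hz : z ≠ -1)
    (hden : 1 + (((d : ℂ) - 1) / ((d : ℂ) + 1)) * z ≠ 0)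
    (hB : ((z + ((d : ℂ) - 1) / ((d : ℂ) + 1)) /
        (1 + (((d : ℂ) - 1) / ((d : ℂ) + 1)) * z)) ^ d ≠ -1)
    (hu : u = (1 - z) / (1 + z)) :
    (1 + u / d) ^ d + (1 - u / d) ^ d ≠ 0 ∧
    (1 - ((z + ((d : ℂ) - 1) / ((d : ℂ) + 1)) /
          (1 + (((d : ℂ) - 1) / ((d : ℂ) + 1)) * z)) ^ d) /
      (1 + ((z + ((d : ℂ) - 1) / ((d : ℂ) + 1)) /
          (1 + (((d : ℂ) - 1) / ((d : ℂ) + 1)) * z)) ^ d) =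
      ((1 + u / d) ^ d - (1 - u / d) ^ d) /
        ((1 + u / d) ^ d + (1 - u / d) ^ d) := by
  set a : ℂ := ((d : ℂ) - 1) / ((d : ℂ) + 1) with ha
  have hd0 : (d : ℂ) ≠ 0 := Nat.cast_ne_zero.mpr (by omega)
  have hd1 : (d : ℂ) + 1 ≠ 0 := by
    have h : ((d + 1 : ℕ) : ℂ) ≠ 0 := Nat.cast_ne_zero.mpr (by omega)
    push_cast at h; exact h
  have hz1 : (1 : ℂ) + z ≠ 0 := fun h => hz (by linear_combination h)
  set c : ℂ := ((d : ℂ) + 1) / ((d : ℂ) * (1 + z)) with hc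
  have hc0 : c ≠ 0 := div_ne_zero hd1 (mul_ne_zero hd0 hz1)
  have h1 : 1 + u / d = c * (1 + a * z) := by
    rw [hu, hc, ha]; field_simp; ring
  have h2 : 1 - u / d = c * (z + a) := by
    rw [hu, hc, ha]; field_simp; ring
  have hQ : (1 + a * z) ^ d ≠ 0 := pow_ne_zero _ hden
  have hsum : (1 + a * z) ^ d + (z + a) ^ d ≠ 0 := by
    intro h
    apply hB
    rw [div_pow, div_eq_iff hQ]
    linear_combination h
  have hdeq : (1 + u / d) ^ d + (1 - u / d) ^ d
      = c ^ d * ((1 + a * z) ^ d + (z + a) ^ d) := by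
    rw [h1, h2, mul_pow, mul_pow]; ring
  have hneq : (1 + u / d) ^ d - (1 - u / d) ^ d
      = c ^ d * ((1 + a * z) ^ d - (z + a) ^ d) := by
    rw [h1, h2, mul_pow, mul_pow]; ring
  have hcd : c ^ d ≠ 0 := pow_ne_zero _ hc0
  refine ⟨by rw [hdeq]; exact mul_ne_zero hcd hsum, ?_⟩
  rw [hdeq, hneq, div_pow, mul_div_mul_left _ _ hcd, one_sub_div hQ, one_add_div hQ]
  rw [div_div_div_cancel_right₀ hQ]
end

section
/- Let γ ∈ ℂ and R > 0 with 4π|γ| ≤ R. Then the map u ↦ u − γ·Log u, where Log is the principal branch of the complex logarithm, is injective on the set W = {u ∈ ℂ : |u| > R and (Re u > 0 or |Im u| > R)} (the region that contains a right half-plane and is bounded by the arc of the circle of radius R in the closed right half-plane together with the two horizontal half-lines Im u = ±R, Re u ≤ 0). -/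
/-!
If `u - γ Log u = v - γ Log v` then `‖u - v‖ ≤ ‖γ‖ ‖Log u - Log v‖`, so it suffices that `Log`
is `(1 + π) / R`-Lipschitz on `W`, since `‖γ‖ (1 + π) / R ≤ (1 + π) / (4π) < 1`. The real part
`log ‖u‖` is `1 / R`-Lipschitz because `‖u‖ ≥ R`. For the argument: when `|arg u - arg v| ≤ π` it
is the angle between `u` and `v`, and the chord bound `‖u - v‖ ≥ 2R/π · angle` applies; otherwise
`u` and `v` lie in opposite half-planes, and on `W` each argument is at most `π / R` times the
modulus of the imaginary part (for `Re u ≤ 0` this uses `|Im u| > R`).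
-/

open InnerProductGeometry Real

theorem InnerProductGeometry.angle_le_mul_norm_sub_of_le_norm {V : Type*} [NormedAddCommGroup V]
    [InnerProductSpace ℝ V] {x y : V} {R : ℝ} (hR : 0 < R) (hx : R ≤ ‖x‖) (hy : R ≤ ‖y‖) :
    angle x y ≤ π / (2 * R) * ‖x - y‖ := by
  set θ := angle x y
  have hθ : 0 ≤ θ := angle_nonneg x y
  have hcos : cos θ ≤ 1 - 2 / π ^ 2 * θ ^ 2 :=
    cos_le_one_sub_mul_cos_sq (abs_le.2 ⟨by linarith [pi_pos], angle_le_pi x y⟩)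
  have hRR : R * R ≤ ‖x‖ * ‖y‖ := mul_le_mul hx hy hR.le (hR.le.trans hx)
  have hsq : (2 * R / π * θ) ^ 2 ≤ ‖x - y‖ ^ 2 :=
    calc (2 * R / π * θ) ^ 2 = 2 * (R * R) * (2 / π ^ 2 * θ ^ 2) := by ring
      _ ≤ 2 * (‖x‖ * ‖y‖) * (1 - cos θ) := by gcongr; linarith
      _ ≤ (‖x‖ - ‖y‖) ^ 2 + 2 * (‖x‖ * ‖y‖) * (1 - cos θ) := le_add_of_nonneg_left (sq_nonneg _)
      _ = ‖x - y‖ ^ 2 := by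
        rw [sq (‖x - y‖),
          norm_sub_sq_eq_norm_sq_add_norm_sq_sub_two_mul_norm_mul_norm_mul_cos_angle]
        ring
  have h := (pow_le_pow_iff_left₀ (by positivity) (norm_nonneg _) two_ne_zero).1 hsq
  rw [div_mul_eq_mul_div, le_div_iff₀ (by positivity)]
  rw [div_mul_eq_mul_div, div_le_iff₀ pi_pos] at h
  linarith

theorem Real.Angle.abs_toReal_coe_of_abs_le {θ : ℝ} (h : |θ| ≤ π) :
    |(θ : Real.Angle).toReal| = |θ| := by
  rcases le_total 0 θ with h0 | h0
  · rw [abs_of_nonneg h0] at h ⊢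
    exact Real.Angle.abs_toReal_coe_eq_self_iff.2 ⟨h0, h⟩
  · rw [abs_of_nonpos h0] at h ⊢
    simpa using Real.Angle.abs_toReal_neg_coe_eq_self_iff.2 ⟨neg_nonneg.2 h0, h⟩

theorem Complex.angle_eq_abs_arg_sub_arg {u v : ℂ} (hu : u ≠ 0) (hv : v ≠ 0)
    (h : |u.arg - v.arg| ≤ π) : angle u v = |u.arg - v.arg| := by
  rw [Complex.angle_eq_abs_arg hu hv,
    Complex.arg_coe_angle_eq_iff_eq_toReal.1 (Complex.arg_div_coe_angle hu hv),
    ← Real.Angle.coe_sub, Real.Angle.abs_toReal_coe_of_abs_le h]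

theorem Real.abs_log_sub_log_le {R x y : ℝ} (hR : 0 < R) (hx : R ≤ x) (hy : R ≤ y) :
    |log x - log y| ≤ |x - y| / R := by
  wlog hyx : y ≤ x generalizing x y
  · rw [abs_sub_comm, abs_sub_comm x]
    exact this hy hx (le_of_not_ge hyx)
  have hy0 : 0 < y := hR.trans_le hy
  rw [abs_of_nonneg (sub_nonneg.2 (log_le_log hy0 hyx)), abs_of_nonneg (sub_nonneg.2 hyx)]
  calc log x - log y = log (x / y) := (log_div (by linarith) hy0.ne').symm
    _ ≤ x / y - 1 := log_le_sub_one_of_pos (div_pos (hy0.trans_le hyx) hy0)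
    _ = (x - y) / y := by field_simp
    _ ≤ (x - y) / R := div_le_div_of_nonneg_left (by linarith) hR hy

/-- The paper's region `W_π(R)`. -/
def fatouRegion (R : ℝ) : Set ℂ := {u : ℂ | R < ‖u‖ ∧ (0 < u.re ∨ R < |u.im|)}

section fatouRegion

variable {R : ℝ} {u v : ℂ}

theorem abs_arg_le_of_mem_fatouRegion (hR : 0 < R) (hu : u ∈ fatouRegion R) :
    |u.arg| ≤ π / R * |u.im| := by
  rcases le_or_gt 0 u.re with hre | hre
  · have hsin := mul_abs_le_abs_sin (Complex.abs_arg_le_pi_div_two_iff.2 hre)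
    rw [Complex.sin_arg, abs_div, abs_norm] at hsin
    have hR' : |u.im| / ‖u‖ ≤ |u.im| / R := div_le_div_of_nonneg_left (abs_nonneg _) hR hu.1.le
    calc |u.arg| = π / 2 * (2 / π * |u.arg|) := by field_simp
      _ ≤ π / 2 * (|u.im| / R) := by gcongr; exact hsin.trans hR'
      _ = π / R * |u.im| / 2 := by ring
      _ ≤ π / R * |u.im| := half_le_self (by positivity)
  · have him : R < |u.im| := hu.2.resolve_left hre.not_gt
    calc |u.arg| ≤ π := Complex.abs_arg_le_pi u
      _ = π / R * R := by field_simp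
      _ ≤ π / R * |u.im| := by gcongr

theorem ne_zero_of_mem_fatouRegion (hR : 0 < R) (hu : u ∈ fatouRegion R) : u ≠ 0 :=
  norm_pos_iff.1 (hR.trans hu.1)

theorem abs_arg_sub_arg_le (hR : 0 < R) (hu : u ∈ fatouRegion R) (hv : v ∈ fatouRegion R) :
    |u.arg - v.arg| ≤ π / R * ‖u - v‖ := by
  wlog hvu : v.arg ≤ u.arg generalizing u v
  · rw [abs_sub_comm, norm_sub_rev]
    exact this hv hu (le_of_not_ge hvu)
  rcases le_or_gt |u.arg - v.arg| π with hπ | hπ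
  · rw [← Complex.angle_eq_abs_arg_sub_arg (ne_zero_of_mem_fatouRegion hR hu)
      (ne_zero_of_mem_fatouRegion hR hv) hπ]
    calc angle u v ≤ π / (2 * R) * ‖u - v‖ :=
          angle_le_mul_norm_sub_of_le_norm hR hu.1.le hv.1.le
      _ ≤ π / R * ‖u - v‖ := by gcongr; linarith
  -- Now `u` and `v` lie in opposite half-planes, so each argument is bounded by its imaginary part.
  rw [abs_of_nonneg (sub_nonneg.2 hvu)] at hπ ⊢
  have hu_im : 0 ≤ u.im := Complex.arg_nonneg_iff.1 (by linarith [Complex.neg_pi_lt_arg v])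
  have hv_im : v.im < 0 := Complex.arg_neg_iff.1 (by linarith [Complex.arg_le_pi u])
  calc u.arg - v.arg ≤ |u.arg| + |v.arg| := by linarith [le_abs_self u.arg, neg_abs_le v.arg]
    _ ≤ π / R * |u.im| + π / R * |v.im| :=
        add_le_add (abs_arg_le_of_mem_fatouRegion hR hu) (abs_arg_le_of_mem_fatouRegion hR hv)
    _ = π / R * (u - v).im := by
        rw [abs_of_nonneg hu_im, abs_of_neg hv_im, Complex.sub_im]; ring
    _ ≤ π / R * ‖u - v‖ := by gcongr; exact Complex.im_le_norm _

theorem norm_log_sub_log_le (hR : 0 < R) (hu : u ∈ fatouRegion R) (hv : v ∈ fatouRegion R) :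
    ‖Complex.log u - Complex.log v‖ ≤ (1 + π) / R * ‖u - v‖ := by
  have hre : |(Complex.log u - Complex.log v).re| ≤ ‖u - v‖ / R := by
    rw [Complex.sub_re, Complex.log_re, Complex.log_re]
    exact (Real.abs_log_sub_log_le hR hu.1.le hv.1.le).trans
      (div_le_div_of_nonneg_right (abs_norm_sub_norm_le u v) hR.le)
  have him : |(Complex.log u - Complex.log v).im| ≤ π / R * ‖u - v‖ := by
    rw [Complex.sub_im, Complex.log_im, Complex.log_im]
    exact abs_arg_sub_arg_le hR hu hv
  calc ‖Complex.log u - Complex.log v‖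
      ≤ |(Complex.log u - Complex.log v).re| + |(Complex.log u - Complex.log v).im| :=
        Complex.norm_le_abs_re_add_abs_im _
    _ ≤ ‖u - v‖ / R + π / R * ‖u - v‖ := add_le_add hre him
    _ = (1 + π) / R * ‖u - v‖ := by ring

end fatouRegion

theorem injOn_sub_smul_of_norm_sub_le {𝕜 E : Type*} [NormedField 𝕜] [NormedAddCommGroup E]
    [NormedSpace 𝕜 E] {s : Set E} {g : E → E} {c : 𝕜} {K : ℝ}
    (hg : ∀ u ∈ s, ∀ v ∈ s, ‖g u - g v‖ ≤ K * ‖u - v‖) (hK : ‖c‖ * K < 1) :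
    Set.InjOn (fun u => u - c • g u) s := by
  intro u hu v hv huv
  have hsub : u - v = c • (g u - g v) := by
    rw [smul_sub]; exact sub_eq_sub_iff_sub_eq_sub.1 huv
  have hle : ‖u - v‖ ≤ ‖c‖ * K * ‖u - v‖ :=
    calc ‖u - v‖ = ‖c‖ * ‖g u - g v‖ := by rw [hsub, norm_smul]
      _ ≤ ‖c‖ * (K * ‖u - v‖) := by gcongr; exact hg u hu v hv
      _ = ‖c‖ * K * ‖u - v‖ := by ring
  have : ‖u - v‖ = 0 := by nlinarith [norm_nonneg (u - v)]
  exact sub_eq_zero.1 (norm_eq_zero.1 this)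

/-- Let `γ ∈ ℂ` and `R > 0` with `4π|γ| ≤ R`. Then `u ↦ u − γ·Log u`, where
`Log` is the principal branch of the logarithm, is injective on the region
`W = {u : |u| > R and (Re u > 0 or |Im u| > R)}` (the region `W_π(R)` of the
paper). -/
theorem sub_gamma_log_injOn (γ : ℂ) (R : ℝ) (hR : 0 < R)
    (hγ : 4 * Real.pi * ‖γ‖ ≤ R) :
    Set.InjOn (fun u : ℂ => u - γ * Complex.log u)
      {u : ℂ | R < ‖u‖ ∧ (0 < u.re ∨ R < |u.im|)} := by
  refine injOn_sub_smul_of_norm_sub_le (𝕜 := ℂ) (fun u hu v hv => norm_log_sub_log_le hR hu hv) ?_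
  calc ‖γ‖ * ((1 + π) / R) = (4 * π * ‖γ‖) * (1 + π) / (4 * π * R) := by field_simp
    _ ≤ R * (1 + π) / (4 * π * R) := by gcongr
    _ = (1 + π) / (4 * π) := by field_simp
    _ < 1 := by rw [div_lt_one (by positivity)]; linarith [pi_gt_three]
end
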